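/- Let W ⊆ (ℝmax^n)^2 be a congruence (not necessarily closed) and let f, g ∈ ℝmax^n be such that (f,g) ∈ W. Then for every index i and every γ ∈ ℝmax with γ ≤ f_i, one has (g, g ⊕ e_i γ) ∈ W, where g ⊕ e_i γ is the vector obtained from g by replacing its i-th entry by max(g_i, γ). -/

import Mathlib

open scoped Classical

noncomputable section

/-- The max-plus semiring `ℝmax = ℝ ∪ {-∞}`. Its `Add` is the max-plus
"multiplication" `a ⊗ b = a + b` (with `-∞` absorbing), its `max` is the
max-plus "addition". -/
abbrev Rmax := WithBot ℝ

/-- The order topology on `WithBot ℝ` (the topology of the metric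
`d(a,b) = |exp a - exp b|`). -/
instance : TopologicalSpace Rmax := Preorder.topology Rmax
instance : OrderTopology Rmax := ⟨rfl⟩

/-- Vectors of the max-plus semimodule `ℝmax^n`. -/
abbrev RmaxVec (n : ℕ) := Fin n → Rmax

/-- The max-plus linear combination `xλ ⊕ yμ`. -/
def maxComb {n : ℕ} (x y : RmaxVec n) (lam mu : Rmax) : RmaxVec n :=
  fun i => max (x i + lam) (y i + mu)

/-- `V ⊆ ℝmax^n` is a (max-plus) subsemimodule. -/
def IsSubsemimodule {n : ℕ} (V : Set (RmaxVec n)) : Prop :=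
  ∀ x ∈ V, ∀ y ∈ V, ∀ lam mu : Rmax, maxComb x y lam mu ∈ V

/-- `W ⊆ (ℝmax^n)² ≅ ℝmax^{2n}` is a (max-plus) subsemimodule,
with the entrywise operations. -/
def IsSubsemimodulePair {n : ℕ} (W : Set (RmaxVec n × RmaxVec n)) : Prop :=
  ∀ p ∈ W, ∀ q ∈ W, ∀ lam mu : Rmax,
    (maxComb p.1 q.1 lam mu, maxComb p.2 q.2 lam mu) ∈ W

/-- A pre-congruence: a subsemimodule of `(ℝmax^n)²` containing the diagonal
and transitive. -/
def IsPrecongruence {n : ℕ} (W : Set (RmaxVec n × RmaxVec n)) : Prop :=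
  IsSubsemimodulePair W ∧ (∀ f : RmaxVec n, (f, f) ∈ W) ∧
    ∀ f g h : RmaxVec n, (f, g) ∈ W → (g, h) ∈ W → (f, h) ∈ W

/-- A polar cone: a pre-congruence such that `f ≤ g` implies `(f,g) ∈ W`. -/
def IsPolarCone {n : ℕ} (W : Set (RmaxVec n × RmaxVec n)) : Prop :=
  IsPrecongruence W ∧ ∀ f g : RmaxVec n, f ≤ g → (f, g) ∈ W

/-- A congruence: a symmetric pre-congruence. -/
def IsCongruence {n : ℕ} (W : Set (RmaxVec n × RmaxVec n)) : Prop :=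
  IsPrecongruence W ∧ ∀ f g : RmaxVec n, (f, g) ∈ W → (g, f) ∈ W

/-- The max-plus bracket `⟨y, x⟩ = max_i (y_i + x_i)`. -/
def mpBracket {n : ℕ} (y x : RmaxVec n) : Rmax :=
  Finset.univ.sup fun i => y i + x i

/-- The polar `V°` of `V ⊆ ℝmax^n`. -/
def mpPolar {n : ℕ} (V : Set (RmaxVec n)) : Set (RmaxVec n × RmaxVec n) :=
  { p | ∀ x ∈ V, mpBracket p.1 x ≤ mpBracket p.2 x }

/-- The orthogonal `V⊥` of `V ⊆ ℝmax^n`. -/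
def mpOrtho {n : ℕ} (V : Set (RmaxVec n)) : Set (RmaxVec n × RmaxVec n) :=
  { p | ∀ x ∈ V, mpBracket p.1 x = mpBracket p.2 x }

/-- The dual polar `W⋄` of `W ⊆ (ℝmax^n)²`. -/
def mpDiamond {n : ℕ} (W : Set (RmaxVec n × RmaxVec n)) : Set (RmaxVec n) :=
  { x | ∀ p ∈ W, mpBracket p.1 x ≤ mpBracket p.2 x }

/-- The dual orthogonal `W⊤` of `W ⊆ (ℝmax^n)²`. -/
def mpTop {n : ℕ} (W : Set (RmaxVec n × RmaxVec n)) : Set (RmaxVec n) :=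
  { x | ∀ p ∈ W, mpBracket p.1 x = mpBracket p.2 x }

/-! Since `(g, g ⊕ f) = (g, g) ⊕ (g, f)` lies in `W` and `g ≤ g ⊕ e_i γ ≤ g ⊕ f`, it suffices
that the classes of a congruence are order-convex: from `(a, b) ∈ W` and `a ≤ c ≤ b`, joining
with `(c, c)` gives `(c, b) ∈ W`, and transitivity through `b` gives `(a, c) ∈ W`. -/

lemma maxComb_zero_zero {n : ℕ} (x y : RmaxVec n) : maxComb x y 0 0 = x ⊔ y := by
  funext j
  simp [maxComb]

lemma IsSubsemimodulePair.sup_mem {n : ℕ} {W : Set (RmaxVec n × RmaxVec n)}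
    (hW : IsSubsemimodulePair W) {a b c d : RmaxVec n} (hab : (a, b) ∈ W) (hcd : (c, d) ∈ W) :
    (a ⊔ c, b ⊔ d) ∈ W := by
  simpa only [maxComb_zero_zero] using hW _ hab _ hcd 0 0

lemma IsPrecongruence.mem_of_le_of_le {n : ℕ} {W : Set (RmaxVec n × RmaxVec n)}
    (hW : IsPrecongruence W) {a b c : RmaxVec n} (hab : (a, b) ∈ W) (hac : a ≤ c)
    (hcb : c ≤ b) : (c, b) ∈ W := by
  simpa only [sup_of_le_right hac, sup_of_le_left hcb] using hW.1.sup_mem hab (hW.2.1 c)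

lemma IsCongruence.mem_of_le_of_le {n : ℕ} {W : Set (RmaxVec n × RmaxVec n)}
    (hW : IsCongruence W) {a b c : RmaxVec n} (hab : (a, b) ∈ W) (hac : a ≤ c)
    (hcb : c ≤ b) : (a, c) ∈ W :=
  hW.1.2.2 a b c hab (hW.2 c b (hW.1.mem_of_le_of_le hab hac hcb))

/-- Lemma 4.2 of the paper: if `W` is a congruence (not necessarily closed),
`(f,g) ∈ W` and `γ ≤ f_i`, then `(g, g ⊕ e_i γ) ∈ W`. -/
theorem congruence_add_unit (n : ℕ) (W : Set (RmaxVec n × RmaxVec n))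
    (hW : IsCongruence W) (f g : RmaxVec n) (hfg : (f, g) ∈ W)
    (i : Fin n) (γ : Rmax) (hγ : γ ≤ f i) :
    (g, fun j => if j = i then max (g j) γ else g j) ∈ W := by
  have hg_sup : (g, g ⊔ f) ∈ W := by
    simpa only [sup_idem] using hW.1.1.sup_mem (hW.1.2.1 g) (hW.2 f g hfg)
  refine hW.mem_of_le_of_le hg_sup (fun j => ?_) (fun j => ?_)
  · split_ifs
    exacts [le_max_left _ _, le_rfl]
  · split_ifs with hj
    · subst hj
      exact max_le_max le_rfl hγ
    · exact le_sup_left
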